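/- Let F̂_{n+1} be the empirical distribution function F̂_{n+1}(r) = (1/(n+1)) Σ_{i=1}^n 1{V_i ≤ r} + (1/(n+1))·1{∞ ≤ r} built from exchangeable variables V_1,...,V_n plus a point mass at +∞. If V_1,...,V_{n+1} are exchangeable then P(V_{n+1} ≤ Q(1-α; F̂_{n+1})) ≥ 1-α, where Q(β; F) = inf{r : F(r) ≥ β}. -/

import Mathlib

open MeasureTheory Finset
open scoped Classical ENNReal

noncomputable def cnt {N : ℕ} (x : Fin N → ℝ) (j : Fin N) : ℕ :=
  (Finset.univ.filter (fun i => i ≠ j ∧ x i < x j)).card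

lemma cnt_comp {N : ℕ} (x : Fin N → ℝ) (σ : Equiv.Perm (Fin N)) (j : Fin N) :
    cnt (fun i => x (σ i)) j = cnt x (σ j) := by
  unfold cnt
  apply Finset.card_bij' (fun i _ => σ i) (fun i _ => σ.symm i)
  · intro i hi
    simp only [mem_filter, mem_univ, true_and] at hi ⊢
    exact ⟨fun h => hi.1 (σ.injective h), hi.2⟩
  · intro i hi
    simp only [mem_filter, mem_univ, true_and, Equiv.apply_symm_apply] at hi ⊢
    exact ⟨fun h => hi.1 (by rw [← h, Equiv.apply_symm_apply]), hi.2⟩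
  · intro i _; simp
  · intro i _; simp

lemma cnt_count {N : ℕ} (x : Fin (N + 1) → ℝ) (m : ℕ) (hm : m ≤ N) :
    m + 1 ≤ (Finset.univ.filter (fun j => cnt x j ≤ m)).card := by
  set e := Tuple.sort x with he
  have hmono : Monotone (x ∘ e) := Tuple.monotone_sort x
  have key : ∀ k : Fin (N + 1), (k : ℕ) ≤ m → cnt x (e k) ≤ m := by
    intro k hk
    have h1 : cnt x (e k) ≤ (Finset.univ.filter (fun i => x i < x (e k))).card := by
      apply Finset.card_le_card
      intro i hi
      simp only [mem_filter, mem_univ, true_and] at hi ⊢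
      exact hi.2
    have h2 : (Finset.univ.filter (fun i => x i < x (e k))).card
        ≤ (Finset.univ.filter (fun l : Fin (N + 1) => (l : ℕ) < (k : ℕ))).card := by
      apply Finset.card_le_card_of_injOn (fun i => e.symm i)
      · intro i hi
        simp only [mem_coe, mem_filter, mem_univ, true_and] at hi ⊢
        by_contra hc
        push_neg at hc
        have : x (e k) ≤ x (e (e.symm i)) := hmono (by exact_mod_cast hc)
        rw [Equiv.apply_symm_apply] at this
        exact absurd hi (not_lt.mpr this)
      · exact fun a _ b _ h => e.symm.injective h
    have h3 : (Finset.univ.filter (fun l : Fin (N + 1) => (l : ℕ) < (k : ℕ))).card = k := by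
      have : (Finset.univ.filter (fun l : Fin (N + 1) => (l : ℕ) < (k : ℕ))) = Finset.Iio k := by
        ext l
        simp only [Finset.mem_filter, Finset.mem_univ, true_and, Finset.mem_Iio, Fin.lt_def]
      rw [this, Fin.card_Iio]
    omega
  have hcard : ((Finset.univ.filter (fun k : Fin (N + 1) => (k : ℕ) ≤ m)).image e).card
      = m + 1 := by
    rw [Finset.card_image_of_injective _ e.injective]
    have : (Finset.univ.filter (fun k : Fin (N + 1) => (k : ℕ) ≤ m))
        = Finset.Iic (⟨m, Nat.lt_succ_of_le hm⟩ : Fin (N + 1)) := by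
      ext l; simp [Fin.le_def]
    rw [this, Fin.card_Iic]
  rw [← hcard]
  apply Finset.card_le_card
  intro j hj
  simp only [Finset.mem_image, mem_filter, mem_univ, true_and] at hj ⊢
  obtain ⟨k, hk, rfl⟩ := hj
  exact key k hk

lemma measurable_cntR {N : ℕ} (j : Fin N) :
    Measurable (fun x : Fin N → ℝ => (cnt x j : ℝ)) := by
  unfold cnt
  simp_rw [Finset.card_filter, Nat.cast_sum]
  apply Finset.measurable_sum
  intro i _
  have : (fun x : Fin N → ℝ => ((if i ≠ j ∧ x i < x j then 1 else 0 : ℕ) : ℝ))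
      = fun x : Fin N → ℝ => (if i ≠ j ∧ x i < x j then (1:ℝ) else 0) := by
    ext x; split <;> simp
  rw [this]
  apply Measurable.ite _ measurable_const measurable_const
  have : {x : Fin N → ℝ | i ≠ j ∧ x i < x j}
      = {x : Fin N → ℝ | i ≠ j} ∩ {x | x i < x j} := rfl
  rw [this]
  exact (MeasurableSet.const _).inter
    (measurableSet_lt (measurable_pi_apply i) (measurable_pi_apply j))


/-- Generalized `t`-quantile of a (sub-)c.d.f. `F : ℝ → ℝ`, valued in the
extended reals, with the convention that it is `+∞` when `F` never reaches level `t`. -/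
noncomputable def Qe (F : ℝ → ℝ) (t : ℝ) : EReal :=
  sInf ((fun r : ℝ => (r : EReal)) '' {r : ℝ | t ≤ F r})

/-- Marginal coverage of split conformal prediction: for exchangeable
`V 0, …, V n`, `P(V_{n+1} ≤ Q(1-α; F̂_{n+1})) ≥ 1-α`, where `F̂_{n+1}` is
the empirical c.d.f. of `V 0, …, V (n-1)` together with a point mass at `+∞`. -/
theorem stmt1 {Ω : Type*} [MeasurableSpace Ω] (P : Measure Ω) [IsProbabilityMeasure P]
    (n : ℕ) (V : Fin (n + 1) → Ω → ℝ)
    (hmeas : ∀ i, Measurable (V i))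
    (hexch : ∀ σ : Equiv.Perm (Fin (n + 1)),
      Measure.map (fun ω => fun i => V (σ i) ω) P = Measure.map (fun ω => fun i => V i ω) P)
    (α : ℝ) (hα : α ∈ Set.Ioo (0 : ℝ) 1)
    (Fhat : Ω → ℝ → ℝ)
    (hFhat : ∀ ω r, Fhat ω r =
      (∑ i : Fin n, (1 / (n + 1 : ℝ)) * (if V i.castSucc ω ≤ r then 1 else 0))
        + (1 / (n + 1 : ℝ)) * (if (⊤ : EReal) ≤ (r : EReal) then 1 else 0)) :
    ENNReal.ofReal (1 - α) ≤
      P {ω | (V (Fin.last n) ω : EReal) ≤ Qe (Fhat ω) (1 - α)} := by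
  obtain ⟨hα0, hα1⟩ := hα
  set t : ℝ := (1 - α) * ((n : ℝ) + 1) with ht
  have hn1 : (0:ℝ) < (n:ℝ) + 1 := by positivity
  have htpos : 0 < t := mul_pos (by linarith) hn1
  have htle : t ≤ (n:ℝ) + 1 := by nlinarith
  set m : ℕ := ⌈t⌉₊ - 1 with hm
  have hm1 : m + 1 = ⌈t⌉₊ := Nat.succ_pred_eq_of_pos (Nat.ceil_pos.mpr htpos)
  have hmlt : (m : ℝ) < t := by
    have h := Nat.ceil_lt_add_one (le_of_lt htpos)
    have h2 : ((m : ℕ) : ℝ) + 1 = (⌈t⌉₊ : ℝ) := by exact_mod_cast hm1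
    linarith
  have htm : t ≤ (m : ℝ) + 1 := by
    have h2 : ((m : ℕ) : ℝ) + 1 = (⌈t⌉₊ : ℝ) := by exact_mod_cast hm1
    have := Nat.le_ceil t
    linarith
  have hmn : m ≤ n := by
    have : ⌈t⌉₊ ≤ n + 1 := Nat.ceil_le.mpr (by exact_mod_cast htle)
    omega
  set W : Ω → (Fin (n + 1) → ℝ) := fun ω i => V i ω with hWdef
  have hW : Measurable W := measurable_pi_lambda _ hmeas
  set A : Fin (n + 1) → Set Ω := fun j => {ω | cnt (W ω) j ≤ m} with hAdef
  have hA : ∀ j, MeasurableSet (A j) := by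
    intro j
    have : A j = (fun ω => (cnt (W ω) j : ℝ)) ⁻¹' (Set.Iic (m : ℝ)) := by
      ext ω
      simp only [hAdef, Set.mem_setOf_eq, Set.mem_preimage, Set.mem_Iic, Nat.cast_le]
    rw [this]
    exact ((measurable_cntR j).comp hW) measurableSet_Iic
  set B : Set (Fin (n + 1) → ℝ) := {x | cnt x (Fin.last n) ≤ m} with hBdef
  have hB : MeasurableSet B := by
    have : B = (fun x : Fin (n+1) → ℝ => (cnt x (Fin.last n) : ℝ)) ⁻¹' (Set.Iic (m : ℝ)) := by
      ext x
      simp only [hBdef, Set.mem_setOf_eq, Set.mem_preimage, Set.mem_Iic, Nat.cast_le]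
    rw [this]
    exact (measurable_cntR _) measurableSet_Iic
  have hAeq : ∀ j, P (A j) = P (A (Fin.last n)) := by
    intro j
    set σ := Equiv.swap j (Fin.last n) with hσ
    have hWσ : Measurable (fun ω => fun i => V (σ i) ω) :=
      measurable_pi_lambda _ (fun i => hmeas _)
    have h1 := congrArg (fun μ : Measure (Fin (n+1) → ℝ) => μ B) (hexch σ)
    rw [Measure.map_apply hWσ hB, Measure.map_apply hW hB] at h1
    have h2 : (fun ω => fun i => V (σ i) ω) ⁻¹' B = A j := by
      ext ω
      simp only [Set.mem_preimage, hBdef, hAdef, Set.mem_setOf_eq]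
      have : (fun i => V (σ i) ω) = (fun i => (W ω) (σ i)) := rfl
      rw [this, cnt_comp, Equiv.swap_apply_right]
    have h3 : W ⁻¹' B = A (Fin.last n) := rfl
    rw [h2, h3] at h1
    exact h1
  have hsum2 : ∑ j : Fin (n + 1), P (A j) = ((n : ℝ≥0∞) + 1) * P (A (Fin.last n)) := by
    rw [Finset.sum_congr rfl (fun j _ => hAeq j), Finset.sum_const, Finset.card_univ,
      Fintype.card_fin, nsmul_eq_mul]
    norm_cast
  have hsum : ((m : ℝ≥0∞) + 1) ≤ ∑ j : Fin (n + 1), P (A j) := by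
    have hmeas_ind : ∀ j ∈ Finset.univ, Measurable ((A j).indicator (1 : Ω → ℝ≥0∞)) :=
      fun j _ => measurable_one.indicator (hA j)
    calc ((m : ℝ≥0∞) + 1) = ∫⁻ _, ((m : ℝ≥0∞) + 1) ∂P := by
          rw [lintegral_const, measure_univ, mul_one]
      _ ≤ ∫⁻ ω, ∑ j : Fin (n + 1), (A j).indicator (1 : Ω → ℝ≥0∞) ω ∂P := by
          apply lintegral_mono
          intro ω
          have heq : ∑ j : Fin (n + 1), (A j).indicator (1 : Ω → ℝ≥0∞) ω
              = ((Finset.univ.filter (fun j : Fin (n+1) => ω ∈ A j)).card : ℝ≥0∞) := by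
            rw [Finset.card_filter, Nat.cast_sum]
            apply Finset.sum_congr rfl
            intro j _
            by_cases h : ω ∈ A j <;> simp [Set.indicator_apply, h]
          show ((m : ℝ≥0∞) + 1) ≤ ∑ j : Fin (n + 1), (A j).indicator (1 : Ω → ℝ≥0∞) ω
          rw [heq]
          have h2 := cnt_count (W ω) m hmn
          have h3 : (Finset.univ.filter (fun j : Fin (n+1) => ω ∈ A j))
              = (Finset.univ.filter (fun j : Fin (n+1) => cnt (W ω) j ≤ m)) := rfl
          rw [h3]
          have : ((m + 1 : ℕ) : ℝ≥0∞) ≤ _ := Nat.cast_le.mpr h2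
          calc ((m : ℝ≥0∞) + 1) = ((m + 1 : ℕ) : ℝ≥0∞) := by norm_cast
            _ ≤ _ := Nat.cast_le.mpr h2
      _ = ∑ j : Fin (n + 1), ∫⁻ ω, (A j).indicator (1 : Ω → ℝ≥0∞) ω ∂P :=
          lintegral_finset_sum _ hmeas_ind
      _ = ∑ j : Fin (n + 1), P (A j) := by
          apply Finset.sum_congr rfl
          intro j _
          exact lintegral_indicator_one (hA j)
  -- key inequality in ℝ≥0∞
  have hmain : ENNReal.ofReal (1 - α) ≤ P (A (Fin.last n)) := by
    have hkey : ((n : ℝ≥0∞) + 1) * ENNReal.ofReal (1 - α)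
        ≤ ((n : ℝ≥0∞) + 1) * P (A (Fin.last n)) := by
      rw [← hsum2]
      refine le_trans ?_ hsum
      have e1 : ((n : ℝ≥0∞) + 1) * ENNReal.ofReal (1 - α) = ENNReal.ofReal t := by
        rw [ht, ENNReal.ofReal_mul (by linarith : (0:ℝ) ≤ 1 - α)]
        rw [mul_comm]
        congr 1
        rw [show ((n : ℝ) + 1) = ((n + 1 : ℕ) : ℝ) by push_cast; ring,
          ENNReal.ofReal_natCast]
        push_cast; ring
      rw [e1]
      calc ENNReal.ofReal t ≤ ENNReal.ofReal ((m : ℝ) + 1) := ENNReal.ofReal_le_ofReal htm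
        _ = ((m : ℝ≥0∞) + 1) := by
            rw [show ((m : ℝ) + 1) = ((m + 1 : ℕ) : ℝ) by push_cast; ring,
              ENNReal.ofReal_natCast]
            push_cast; ring
    have hne0 : ((n : ℝ≥0∞) + 1) ≠ 0 := by simp
    have hnetop : ((n : ℝ≥0∞) + 1) ≠ ⊤ := by simp [ENNReal.add_ne_top]
    exact (ENNReal.mul_le_mul_iff_right hne0 hnetop).mp hkey
  refine le_trans hmain (measure_mono ?_)
  -- A (last) ⊆ target
  intro ω hω
  simp only [hAdef, Set.mem_setOf_eq] at hω ⊢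
  unfold Qe
  apply le_sInf
  rintro b ⟨r, hr, rfl⟩
  simp only [Set.mem_setOf_eq] at hr
  rw [EReal.coe_le_coe_iff]
  by_contra hc
  push_neg at hc
  have hF := hFhat ω r
  have hzero : (if (⊤ : EReal) ≤ (r : EReal) then (1:ℝ) else 0) = 0 := by
    rw [if_neg]
    rw [top_le_iff]
    exact EReal.coe_ne_top r
  rw [hzero, mul_zero, add_zero, ← Finset.mul_sum] at hF
  have hcard : (∑ i : Fin n, (if V i.castSucc ω ≤ r then (1:ℝ) else 0))
      = ((Finset.univ.filter (fun i : Fin n => V i.castSucc ω ≤ r)).card : ℝ) := by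
    rw [Finset.card_filter, Nat.cast_sum]
    apply Finset.sum_congr rfl
    intro i _
    split <;> simp
  have hineq : t ≤ ((Finset.univ.filter (fun i : Fin n => V i.castSucc ω ≤ r)).card : ℝ) := by
    rw [hF, hcard] at hr
    have h4 := mul_le_mul_of_nonneg_right hr hn1.le
    calc t = (1 - α) * ((n:ℝ) + 1) := ht
      _ ≤ (1 / ((n:ℝ) + 1) * ((Finset.univ.filter (fun i : Fin n => V i.castSucc ω ≤ r)).card : ℝ)) * ((n:ℝ)+1) := h4
      _ = _ := by field_simp
  have hsub : (Finset.univ.filter (fun i : Fin n => V i.castSucc ω ≤ r)).card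
      ≤ cnt (W ω) (Fin.last n) := by
    unfold cnt
    apply Finset.card_le_card_of_injOn (fun i => Fin.castSucc i)
    · intro i hi
      simp only [mem_coe, mem_filter, mem_univ, true_and] at hi ⊢
      exact ⟨(Fin.castSucc_lt_last i).ne, lt_of_le_of_lt hi hc⟩
    · exact fun a _ b _ h => Fin.castSucc_injective n h
  have h5 : (cnt (W ω) (Fin.last n) : ℝ) ≤ (m : ℝ) := Nat.cast_le.mpr hω
  have h6 : ((Finset.univ.filter (fun i : Fin n => V i.castSucc ω ≤ r)).card : ℝ)
      ≤ (cnt (W ω) (Fin.last n) : ℝ) := Nat.cast_le.mpr hsub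
  linarith
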